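/- For every subset A ⊆ ℕ and every ε with 0 ≤ ε ≤ d⁻(A), there exists A' ⊆ A with d⁻(A') = ε (Darboux property of lower asymptotic density). -/

import Mathlib

open Filter

/-- Lower asymptotic density of a set of naturals. -/
noncomputable def dLow (A : Set ℕ) : ℝ :=
  liminf (fun n : ℕ => (Nat.card (A ∩ Set.Iio n : Set ℕ) : ℝ) / n) atTop

/-- Upper asymptotic density of a set of naturals. -/
noncomputable def dUp (A : Set ℕ) : ℝ :=
  limsup (fun n : ℕ => (Nat.card (A ∩ Set.Iio n : Set ℕ) : ℝ) / n) atTop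

/-- Counting function of a set of naturals. -/
noncomputable def cntD (A : Set ℕ) (n : ℕ) : ℕ := Nat.card (A ∩ Set.Iio n : Set ℕ)

lemma cntD_zero (A : Set ℕ) : cntD A 0 = 0 := by
  simp [cntD]

lemma cntD_succ_of_mem {A : Set ℕ} {n : ℕ} (h : n ∈ A) :
    cntD A (n + 1) = cntD A n + 1 := by
  have hfin : (A ∩ Set.Iio n).Finite := (Set.finite_Iio n).inter_of_right _
  have hsub : A ∩ Set.Iio (n + 1) = insert n (A ∩ Set.Iio n) := by
    ext m
    simp only [Set.mem_inter_iff, Set.mem_Iio, Set.mem_insert_iff, Nat.lt_succ_iff,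
      le_iff_lt_or_eq]
    constructor
    · rintro ⟨hmA, hm | hm⟩
      · exact Or.inr ⟨hmA, hm⟩
      · exact Or.inl hm
    · rintro (hm | ⟨hmA, hm⟩)
      · exact ⟨hm ▸ h, Or.inr hm⟩
      · exact ⟨hmA, Or.inl hm⟩
  rw [cntD, cntD, Nat.card_coe_set_eq, Nat.card_coe_set_eq, hsub,
    Set.ncard_insert_of_notMem (by simp) hfin]

lemma cntD_succ_of_not_mem {A : Set ℕ} {n : ℕ} (h : n ∉ A) :
    cntD A (n + 1) = cntD A n := by
  have hsub : A ∩ Set.Iio (n + 1) = A ∩ Set.Iio n := by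
    ext m
    simp only [Set.mem_inter_iff, Set.mem_Iio, Nat.lt_succ_iff, le_iff_lt_or_eq]
    constructor
    · rintro ⟨hmA, hm | hm⟩
      · exact ⟨hmA, hm⟩
      · exact absurd (hm ▸ hmA) h
    · rintro ⟨hmA, hm⟩
      exact ⟨hmA, Or.inl hm⟩
  rw [cntD, cntD, hsub]

lemma cntD_le (A : Set ℕ) (n : ℕ) : cntD A n ≤ n := by
  rw [cntD, Nat.card_coe_set_eq]
  calc (A ∩ Set.Iio n).ncard ≤ (Set.Iio n).ncard :=
        Set.ncard_le_ncard Set.inter_subset_right (Set.finite_Iio n)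
    _ = n := by
        rw [← Nat.card_coe_set_eq, Nat.card_eq_fintype_card, Fintype.card_Iio, Nat.card_Iio]

lemma dLow_eq (A : Set ℕ) :
    dLow A = liminf (fun n : ℕ => (cntD A n : ℝ) / n) atTop := rfl

/-- Counting function of the greedily selected subset. -/
lemma cntD_select (A : Set ℕ) (r : ℝ) (hr0 : 0 ≤ r) (hr1 : r ≤ 1) (n : ℕ) :
    cntD {a | a ∈ A ∧ ⌈r * ((cntD A a : ℝ) + 1)⌉₊ = ⌈r * (cntD A a : ℝ)⌉₊ + 1} n
      = ⌈r * (cntD A n : ℝ)⌉₊ := by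
  classical
  set A' : Set ℕ :=
    {a | a ∈ A ∧ ⌈r * ((cntD A a : ℝ) + 1)⌉₊ = ⌈r * (cntD A a : ℝ)⌉₊ + 1} with hA'
  induction n with
  | zero =>
    rw [cntD_zero, cntD_zero]
    simp
  | succ n ih =>
    by_cases hA : n ∈ A
    · rw [cntD_succ_of_mem hA]
      have hc : ((cntD A n + 1 : ℕ) : ℝ) = (cntD A n : ℝ) + 1 := by push_cast; ring
      rw [hc]
      have hmono : ⌈r * (cntD A n : ℝ)⌉₊ ≤ ⌈r * ((cntD A n : ℝ) + 1)⌉₊ :=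
        Nat.ceil_le_ceil (by nlinarith)
      have hub : ⌈r * ((cntD A n : ℝ) + 1)⌉₊ ≤ ⌈r * (cntD A n : ℝ)⌉₊ + 1 := by
        rw [Nat.ceil_le]
        push_cast
        have := Nat.le_ceil (r * (cntD A n : ℝ))
        nlinarith
      by_cases hsel : n ∈ A'
      · rw [cntD_succ_of_mem hsel, ih]
        have h2 : ⌈r * ((cntD A n : ℝ) + 1)⌉₊ = ⌈r * (cntD A n : ℝ)⌉₊ + 1 := hsel.2
        omega
      · rw [cntD_succ_of_not_mem hsel, ih]
        have hne : ¬ (⌈r * ((cntD A n : ℝ) + 1)⌉₊ = ⌈r * (cntD A n : ℝ)⌉₊ + 1) := by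
          intro h2; exact hsel ⟨hA, h2⟩
        omega
    · have hsel : n ∉ A' := fun h => hA h.1
      rw [cntD_succ_of_not_mem hA, cntD_succ_of_not_mem hsel, ih]

theorem stmt14 (A : Set ℕ) (ε : ℝ) (h0 : 0 ≤ ε) (hε : ε ≤ dLow A) :
    ∃ A' : Set ℕ, A' ⊆ A ∧ dLow A' = ε := by
  classical
  rcases eq_or_lt_of_le h0 with hε0 | hε0
  · -- ε = 0 : take the empty set
    refine ⟨∅, Set.empty_subset _, ?_⟩
    have : (fun n : ℕ => (Nat.card ((∅ : Set ℕ) ∩ Set.Iio n : Set ℕ) : ℝ) / n)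
        = fun _ : ℕ => (0 : ℝ) := by
      funext n; simp
    rw [dLow, this, liminf_const]
    exact hε0
  · -- ε > 0
    set d := dLow A with hd
    have hdpos : 0 < d := lt_of_lt_of_le hε0 hε
    set r : ℝ := ε / d with hrdef
    have hr0 : 0 ≤ r := div_nonneg h0 hdpos.le
    have hr1 : r ≤ 1 := (div_le_one hdpos).mpr hε
    have hrd : r * d = ε := div_mul_cancel₀ ε hdpos.ne'
    set A' : Set ℕ :=
      {a | a ∈ A ∧ ⌈r * ((cntD A a : ℝ) + 1)⌉₊ = ⌈r * (cntD A a : ℝ)⌉₊ + 1} with hA'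
    refine ⟨A', fun a ha => ha.1, ?_⟩
    set f : ℕ → ℝ := fun n => (cntD A n : ℝ) / n with hf
    set g : ℕ → ℝ := fun n => (cntD A' n : ℝ) / n with hg
    have hgsel : ∀ n, cntD A' n = ⌈r * (cntD A n : ℝ)⌉₊ := cntD_select A r hr0 hr1
    have hgval : ∀ n, g n = (⌈r * (cntD A n : ℝ)⌉₊ : ℝ) / n := by
      intro n; simp only [hg, hgsel n]
    -- basic bounds
    have hf0 : ∀ n, 0 ≤ f n := fun n => div_nonneg (Nat.cast_nonneg _) (Nat.cast_nonneg _)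
    have hg0 : ∀ n, 0 ≤ g n := fun n => div_nonneg (Nat.cast_nonneg _) (Nat.cast_nonneg _)
    have hf1 : ∀ n, f n ≤ 1 := by
      intro n
      rcases Nat.eq_zero_or_pos n with h | h
      · simp [hf, h]
      · rw [hf]
        rw [div_le_one (by exact_mod_cast h)]
        exact_mod_cast cntD_le A n
    have hg1 : ∀ n, g n ≤ 1 := by
      intro n
      rcases Nat.eq_zero_or_pos n with h | h
      · simp [hg, h]
      · rw [hg]
        rw [div_le_one (by exact_mod_cast h)]
        exact_mod_cast cntD_le A' n
    have hfB : IsBoundedUnder (· ≤ ·) atTop f := isBoundedUnder_of ⟨1, hf1⟩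
    have hfC : IsBoundedUnder (· ≥ ·) atTop f := isBoundedUnder_of ⟨0, hf0⟩
    have hgB : IsBoundedUnder (· ≤ ·) atTop g := isBoundedUnder_of ⟨1, hg1⟩
    have hgC : IsBoundedUnder (· ≥ ·) atTop g := isBoundedUnder_of ⟨0, hg0⟩
    have hliminff : liminf f atTop = d := (dLow_eq A).symm
    have hgliminf : liminf g atTop = ε := by
      apply le_antisymm
      · -- upper bound: liminf g ≤ ε
        apply le_of_forall_pos_le_add
        intro δ hδ
        have h1 : ∃ᶠ n in atTop, f n < d + δ / 2 := by
          apply frequently_lt_of_liminf_lt hfB.isCoboundedUnder_ge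
          rw [hliminff]; linarith
        have h2 : ∀ᶠ n : ℕ in atTop, (1 : ℝ) / n < δ / 2 :=
          tendsto_one_div_atTop_nhds_zero_nat.eventually_lt_const (by linarith)
        have h3 : ∀ᶠ n : ℕ in atTop, 1 ≤ n := eventually_ge_atTop 1
        have hfreq : ∃ᶠ n in atTop, g n ≤ ε + δ := by
          refine (h1.and_eventually (h2.and h3)).mono ?_
          rintro n ⟨hn1, hn2, hn3⟩
          have hnpos : (0 : ℝ) < n := by exact_mod_cast hn3
          have hceil : (⌈r * (cntD A n : ℝ)⌉₊ : ℝ) < r * (cntD A n : ℝ) + 1 :=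
            Nat.ceil_lt_add_one (by positivity)
          rw [hgval n]
          have step1 : (⌈r * (cntD A n : ℝ)⌉₊ : ℝ) / n ≤ (r * (cntD A n : ℝ) + 1) / n := by
            gcongr
          have step2 : (r * (cntD A n : ℝ) + 1) / n = r * f n + 1 / n := by
            rw [hf]; field_simp
          have step3 : r * f n ≤ r * (d + δ / 2) := mul_le_mul_of_nonneg_left hn1.le hr0
          have step4 : r * (d + δ / 2) = ε + r * (δ / 2) := by rw [mul_add, hrd]
          have step5 : r * (δ / 2) ≤ δ / 2 := by nlinarith
          have := hn2.le
          calc (⌈r * (cntD A n : ℝ)⌉₊ : ℝ) / n ≤ r * f n + 1 / n := by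
                rw [← step2]; exact step1
            _ ≤ ε + δ := by linarith
        exact liminf_le_of_frequently_le hfreq hgC
      · -- lower bound: ε ≤ liminf g
        apply le_of_forall_pos_le_add
        intro δ hδ
        rw [← sub_le_iff_le_add]
        apply le_liminf_of_le hgB.isCoboundedUnder_ge
        have h1 : ∀ᶠ n in atTop, d - δ < f n := by
          apply eventually_lt_of_lt_liminf _ hfC
          rw [hliminff]; linarith
        have h3 : ∀ᶠ n : ℕ in atTop, 1 ≤ n := eventually_ge_atTop 1
        filter_upwards [h1, h3] with n hn1 hn3
        have hnpos : (0 : ℝ) < n := by exact_mod_cast hn3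
        have hceil : r * (cntD A n : ℝ) ≤ (⌈r * (cntD A n : ℝ)⌉₊ : ℝ) := Nat.le_ceil _
        rw [hgval n]
        have step1 : r * f n ≤ (⌈r * (cntD A n : ℝ)⌉₊ : ℝ) / n := by
          rw [hf, mul_div_assoc']
          gcongr
        have step2 : r * (d - δ) ≤ r * f n := mul_le_mul_of_nonneg_left hn1.le hr0
        have step3 : ε - δ ≤ r * (d - δ) := by
          rw [mul_sub, hrd]
          nlinarith
        linarith
    rw [dLow_eq, ← hg]
    exact hgliminf
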